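/- arXiv:1307.8289 — 2 statements merged into one kernel-verified Lean document; each statement's English description precedes it below -/
import Mathlib

section
/- Let λ be a strict partition with ℓ(λ) = r ≥ 1. Then S_{w_0}(read(T^λ)) = read(L^λ). -/
namespace QueerCrystal

/-- A word: a finite sequence of letters (we use natural numbers; letters lie in `{1,…,n}`). -/
abbrev Word := List ℕ

/-- All letters of `u` lie in `{1,…,n}`. -/
def InLetters (n : ℕ) (u : Word) : Prop := ∀ x ∈ u, 1 ≤ x ∧ x ≤ n

/-- Position (0-indexed) of the rightmost uncancelled `−` (a letter `i+1`) in the signature rule: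
letters `i` are `+`, letters `i+1` are `−`, and a `+` cancels a `−` to its right.
Scanning left to right, a `−` is uncancelled iff no unmatched `+` is currently available. -/
def epos (i : ℕ) (u : Word) : Option ℕ :=
  (((List.range u.length).zip u).foldl
    (fun (st : ℕ × Option ℕ) (p : ℕ × ℕ) =>
      if p.2 = i then (st.1 + 1, st.2)
      else if p.2 = i + 1 then
        (if st.1 = 0 then (0, some p.1) else (st.1 - 1, st.2))
      else st)
    ((0 : ℕ), (none : Option ℕ))).2

/-- Position (0-indexed) of the leftmost uncancelled `+` (a letter `i`) in the signature rule. -/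
def fpos (i : ℕ) (u : Word) : Option ℕ :=
  (((List.range u.length).zip u).foldr
    (fun (p : ℕ × ℕ) (st : ℕ × Option ℕ) =>
      if p.2 = i + 1 then (st.1 + 1, st.2)
      else if p.2 = i then
        (if st.1 = 0 then (0, some p.1) else (st.1 - 1, st.2))
      else st)
    ((0 : ℕ), (none : Option ℕ))).2

/-- The even Kashiwara operator `ẽᵢ` (`none` plays the role of `0`). -/
def ke (i : ℕ) (u : Word) : Option Word := (epos i u).map (fun k => u.set k i)

/-- The even Kashiwara operator `f̃ᵢ` (`none` plays the role of `0`). -/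
def kf (i : ℕ) (u : Word) : Option Word := (fpos i u).map (fun k => u.set k (i + 1))

/-- The largest position of `u` whose letter lies in `{1,2}`. -/
def pos12 (u : Word) : Option ℕ :=
  ((List.range u.length).zip u).foldl (fun (st : Option ℕ) (p : ℕ × ℕ) =>
    if p.2 = 1 ∨ p.2 = 2 then some p.1 else st) none

/-- The odd Kashiwara operator `ẽ_{1̄}`. -/
def keb (u : Word) : Option Word :=
  match pos12 u with
  | none => none
  | some k => if u.getD k 0 = 2 then some (u.set k 1) else none

/-- The odd Kashiwara operator `f̃_{1̄}`. -/
def kfb (u : Word) : Option Word :=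
  match pos12 u with
  | none => none
  | some k => if u.getD k 0 = 1 then some (u.set k 2) else none

/-- Iterate a partially defined operator. -/
def iterOp (g : Word → Option Word) : ℕ → Word → Option Word
  | 0, u => some u
  | k + 1, u => (g u).bind (iterOp g k)

/-- The Weyl-group operator `Sᵢ`: apply `f̃ᵢ^d` if `d = mᵢ − mᵢ₊₁ ≥ 0`, and `ẽᵢ^{−d}` otherwise. -/
def Si (i : ℕ) (u : Word) : Option Word :=
  if u.count (i + 1) ≤ u.count i
  then iterOp (kf i) (u.count i - u.count (i + 1)) u
  else iterOp (ke i) (u.count (i + 1) - u.count i) u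

/-- Apply the operators `S_j` for `j` running through `l` (head of `l` applied first). -/
def applyS (l : List ℕ) (o : Option Word) : Option Word :=
  l.foldl (fun acc j => acc.bind (Si j)) o

/-- Indices, in order of application, of the composite `S_2∘⋯∘S_i∘S_1∘⋯∘S_{i−1}`
(rightmost applied first): `[i−1,…,1, i,…,2]`. -/
def rseq (i : ℕ) : List ℕ :=
  ((List.range (i - 1)).reverse.map (· + 1)) ++ ((List.range (i - 1)).reverse.map (· + 2))

/-- Indices, in order of application, of the composite `S_{i−1}∘⋯∘S_1∘S_i∘⋯∘S_2`
(rightmost applied first): `[2,…,i, 1,…,i−1]`. -/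
def lseq (i : ℕ) : List ℕ :=
  ((List.range (i - 1)).map (· + 2)) ++ ((List.range (i - 1)).map (· + 1))

/-- The odd Kashiwara operator `ẽ_{ī}` (for `i = 1` this is `ẽ_{1̄}`). -/
def kebar (i : ℕ) (u : Word) : Option Word :=
  applyS (lseq i) ((applyS (rseq i) (some u)).bind keb)

/-- The odd Kashiwara operator `f̃_{ī}` (for `i = 1` this is `f̃_{1̄}`). -/
def kfbar (i : ℕ) (u : Word) : Option Word :=
  applyS (lseq i) ((applyS (rseq i) (some u)).bind kfb)

/-- `u` is a highest weight vector: `ẽᵢ u = 0` and `ẽ_{ī} u = 0` for all `i ∈ {1,…,n−1}`. -/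
def IsHW (n : ℕ) (u : Word) : Prop :=
  ∀ i, 1 ≤ i → i ≤ n - 1 → ke i u = none ∧ kebar i u = none

/-- Indices, in order of application, of
`S_{w₀} = S_1∘(S_2∘S_1)∘⋯∘(S_{n−1}∘⋯∘S_1)` (rightmost applied first). -/
def w0seq (n : ℕ) : List ℕ :=
  ((List.range (n - 1)).reverse.map (fun k => (List.range (k + 1)).map (· + 1))).flatten

/-- `u` is a lowest weight vector: `S_{w₀} u` is defined and is a highest weight vector. -/
def IsLW (n : ℕ) (u : Word) : Prop :=
  ∃ v, applyS (w0seq n) (some u) = some v ∧ IsHW n v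

/-- `u = u₁⋯u_N` is a hook word: nonempty, and for some (0-indexed) `k < N` we have
`u₁ ≥ ⋯ ≥ u_{k+1} < u_{k+2} < ⋯ < u_N`. -/
def IsHook (u : Word) : Prop :=
  u ≠ [] ∧ ∃ k < u.length,
    (∀ j, j < k → u.getD (j + 1) 0 ≤ u.getD j 0) ∧
    (∀ j, k ≤ j → j + 1 < u.length → u.getD j 0 < u.getD (j + 1) 0)

/-- A strict partition `(λ₁,…,λ_n)`, encoded as a function `ℕ → ℕ` supported on `{1,…,n}`:
weakly decreasing, and two consecutive equal parts must be zero. -/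
def IsStrictPartition (n : ℕ) (lam : ℕ → ℕ) : Prop :=
  lam 0 = 0 ∧ (∀ i, n < i → lam i = 0) ∧
  ∀ i, 1 ≤ i → i < n → lam (i + 1) ≤ lam i ∧ (0 < lam (i + 1) → lam (i + 1) < lam i)

/-- `ℓ(λ)`: the number of nonzero parts. -/
def ell (n : ℕ) (lam : ℕ → ℕ) : ℕ :=
  ((Finset.Icc 1 n).filter (fun i => lam i ≠ 0)).card

/-- `|λ| = λ₁ + ⋯ + λ_n`. -/
def sizeL (n : ℕ) (lam : ℕ → ℕ) : ℕ := ∑ i ∈ Finset.Icc 1 n, lam i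

/-- The `i`-th row (1-indexed) of a tableau, encoded as a list of rows (top row first). -/
def row (T : List Word) (i : ℕ) : Word := T.getD (i - 1) []

/-- `T` is a semistandard decomposition tableau of shape `λ`: it has `ℓ(λ)` rows, the `i`-th row
is a hook word of length `λᵢ` in the letters `{1,…,n}`, and no subsequence of `v_{i+1}v_i`
that is a hook word has length greater than `λᵢ`. -/
def IsSSDT (n : ℕ) (lam : ℕ → ℕ) (T : List Word) : Prop :=
  T.length = ell n lam ∧
  (∀ i, 1 ≤ i → i ≤ T.length →
    InLetters n (row T i) ∧ (row T i).length = lam i ∧ IsHook (row T i)) ∧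
  (∀ i, 1 ≤ i → i + 1 ≤ T.length →
    ∀ w : Word, w.Sublist (row T (i + 1) ++ row T i) → IsHook w → w.length ≤ lam i)

/-- The reading word `read(T) = v_r v_{r−1} ⋯ v_1`. -/
def readT (T : List Word) : Word := T.reverse.flatten

/-- The `i`-th row of `T^λ`:
`(r−i+1)^{λ_r} (r−i)^{λ_{r−1}−λ_r} ⋯ 1^{λ_i−λ_{i+1}}`. -/
def Trow (lam : ℕ → ℕ) (r i : ℕ) : Word :=
  ((List.range (r - i + 1)).reverse.map
    (fun s => List.replicate (lam (i + s) - lam (i + s + 1)) (s + 1))).flatten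

/-- The highest weight tableau `T^λ`. -/
def Ttab (n : ℕ) (lam : ℕ → ℕ) : List Word :=
  (List.range (ell n lam)).map (fun i0 => Trow lam (ell n lam) (i0 + 1))

/-- The lowest weight tableau `L^λ`, whose `i`-th row is `(n−i+1)^{λᵢ}`. -/
def Ltab (n : ℕ) (lam : ℕ → ℕ) : List Word :=
  (List.range (ell n lam)).map (fun i0 => List.replicate (lam (i0 + 1)) (n - i0))

/-- Length of the maximal weakly decreasing prefix. -/
def decLen : Word → ℕ
  | [] => 0
  | [_] => 1
  | a :: b :: t => if b ≤ a then decLen (b :: t) + 1 else 1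

/-- Boolean test for being strictly increasing. -/
def strIncB : Word → Bool
  | [] => true
  | [_] => true
  | a :: b :: t => decide (a < b) && strIncB (b :: t)

/-- Boolean test for being a hook word. -/
def isHookB (u : Word) : Bool := (!u.isEmpty) && strIncB (u.drop (decLen u - 1))

/-- Insertion of a letter `x` into a tableau (list of rows, top row first). -/
def insertOne : List Word → ℕ → List Word
  | [], x => [[x]]
  | v :: rest, x =>
    if isHookB (v ++ [x]) then (v ++ [x]) :: rest
    else
      let k := decLen v
      let j := k + (v.drop k).findIdx (fun a => decide (x ≤ a))
      let y := v.getD j 0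
      let j' := (v.take k).findIdx (fun a => decide (a < y))
      let z := v.getD j' 0
      ((v.set j x).set j' y) :: insertOne rest z

/-- Insertion of a word, letter by letter from the left. -/
def insertWord (T : List Word) (w : Word) : List Word := w.foldl insertOne T

/-- `T ← T' := T ← read(T')`. -/
def insertTab (T T' : List Word) : List Word := insertWord T (readT T')

/-- One application of a Kashiwara operator (`ẽᵢ, f̃ᵢ` for `i ∈ {1,…,n−1}`, or `ẽ_{1̄}, f̃_{1̄}`). -/
def Step (n : ℕ) (v w : Word) : Prop :=
  (∃ i, 1 ≤ i ∧ i ≤ n - 1 ∧ (ke i v = some w ∨ kf i v = some w)) ∨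
    keb v = some w ∨ kfb v = some w

/-- Membership in the connected component `C(u)`. -/
def InComp (n : ℕ) (u : Word) : Word → Prop := Relation.ReflTransGen (Step n) u

/-- The set of Kashiwara operators `ẽᵢ, f̃ᵢ` (`i ∈ {1,…,n−1}`), `ẽ_{1̄}, f̃_{1̄}`. -/
def OpSet (n : ℕ) : Set (Word → Option Word) :=
  {g | (∃ i, 1 ≤ i ∧ i ≤ n - 1 ∧ (g = ke i ∨ g = kf i)) ∨ g = keb ∨ g = kfb}

/-- `q(n)`-crystal equivalence of the words `u` and `v`: a weight-preserving bijection
`ψ : C(u) → C(v)` with `ψ(u) = v` commuting with all Kashiwara operators (including vanishing). -/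
def CrystalEquiv (n : ℕ) (u v : Word) : Prop :=
  ∃ ψ : Word → Word,
    ψ u = v ∧
    (∀ b, InComp n u b → InComp n v (ψ b)) ∧
    (∀ b b', InComp n u b → InComp n u b' → ψ b = ψ b' → b = b') ∧
    (∀ c, InComp n v c → ∃ b, InComp n u b ∧ ψ b = c) ∧
    (∀ b, InComp n u b → ∀ j, (ψ b).count j = b.count j) ∧
    (∀ g ∈ OpSet n, ∀ b, InComp n u b →
      ((g b = none ↔ g (ψ b) = none) ∧ ∀ w, g b = some w → g (ψ b) = some (ψ w)))

/-- The word `f̃_1(f̃_2(⋯(f̃_{j−1} b)⋯))` (for `j = 1` this is `b` itself). -/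
def fchain (j : ℕ) (b : Word) : Option Word :=
  ((List.range (j - 1)).reverse.map (· + 1)).foldl (fun o i => o.bind (kf i)) (some b)

end QueerCrystal

/-!
Read `T^λ` as the word `v_r ⋯ v_1`. The operators of `S_{w₀}` come in blocks
`S_{n-1-t} ∘ ⋯ ∘ S_1`, `t = 0, …, n-1` (the last one empty), and the `t`-th block turns the row
`v_{t+1}` of `T^λ` into the row `(n-t)^{λ_{t+1}}` of `L^λ`, fixing everything else. Inside the
block, once `S_1, …, S_{j-1}` have merged the letters `≤ j` of that row into one run
`j^{λ_{t+1} - λ_{t+j+1}}`, the operator `S_j` sees the run `(j+1)^e j^d` with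
`e = λ_{t+j+1} - λ_{t+j+2}`. The rows `v_r ⋯ v_{t+2}` to its left carry exactly `e` uncancelled
`+` and no uncancelled `−` for `j` (row `v_{q+1}` contributes `λ_{q+j} - λ_{q+j+1}` pluses and
`λ_{q+j+1} - λ_{q+j+2}` minuses, and these telescope), so they cancel the `e` minuses of the run,
and `S_j = f̃_j^d` raises the `d` letters `j` one by one, producing `(j+1)^{e+d}`. The rows of
`L^λ` already built consist of letters `> n-t` and are invisible to the block.
-/

namespace QueerCrystal

open List

def fstep (i : ℕ) (p : ℕ × ℕ) (st : ℕ × Option ℕ) : ℕ × Option ℕ :=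
  if p.2 = i + 1 then (st.1 + 1, st.2)
  else if p.2 = i then (if st.1 = 0 then (0, some p.1) else (st.1 - 1, st.2))
  else st

/-- The right-to-left scan of `fpos` over `u`, whose first letter sits at position `s`. The state
is (number of pending `−`, position of the leftmost uncancelled `+` found so far). -/
def fscan (i s : ℕ) (u : Word) (st : ℕ × Option ℕ) : ℕ × Option ℕ :=
  ((range' s u.length).zip u).foldr (fstep i) st

theorem fpos_eq_fscan (i : ℕ) (u : Word) : fpos i u = (fscan i 0 u (0, none)).2 := by
  rw [fscan, ← range_eq_range']
  rfl

theorem fscan_nil (i s : ℕ) (st : ℕ × Option ℕ) : fscan i s [] st = st := rfl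

theorem fscan_cons (i s a : ℕ) (u : Word) (st : ℕ × Option ℕ) :
    fscan i s (a :: u) st = fstep i (s, a) (fscan i (s + 1) u st) := rfl

theorem fscan_append (i s : ℕ) (u v : Word) (st : ℕ × Option ℕ) :
    fscan i s (u ++ v) st = fscan i s u (fscan i (s + u.length) v st) := by
  rw [fscan, fscan, fscan, length_append, ← range'_append_1, zip_append (by simp), foldr_append]

/-- With at least `u.count i` pending `−`, the counter is positive whenever a letter `i` is read,
so every `+` is cancelled. -/
theorem fscan_of_count_le (i s : ℕ) (u : Word) {p : ℕ} (k : Option ℕ) (hp : u.count i ≤ p) :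
    fscan i s u (p, k) = (p - u.count i + u.count (i + 1), k) := by
  induction u generalizing s with
  | nil => simp [fscan_nil]
  | cons a u ih =>
    have hu : u.count i ≤ p := le_trans (count_le_count_cons ..) hp
    rw [fscan_cons, ih _ hu, fstep]
    by_cases h1 : a = i + 1
    · subst h1
      rw [if_pos rfl, count_cons_self, count_cons_of_ne (by omega), ← Nat.add_assoc]
    by_cases h2 : a = i
    · subst h2
      rw [count_cons_self] at hp
      rw [if_neg h1, if_pos rfl, if_neg (by omega), count_cons_self, count_cons_of_ne h1]
      congr 1
      omega
    · simp [h1, h2]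

theorem fscan_replicate_self (i s d : ℕ) (k : Option ℕ) :
    fscan i s (replicate (d + 1) i) (0, k) = (0, some s) := by
  induction d generalizing s with
  | zero => simp [fscan_cons, fscan_nil, fstep]
  | succ d ih =>
    rw [replicate_succ, fscan_cons, ih]
    simp [fstep]

/-- `A` absorbs `e` pending `−`: its reduced `i`-signature is `+^e`. -/
def Absorbs (i e : ℕ) (A : Word) : Prop :=
  ∀ s p k, e ≤ p → fscan i s A (p, k) = (p - e, k)

theorem absorbs_nil (i : ℕ) : Absorbs i 0 [] := fun _ _ _ _ => rfl

theorem Absorbs.append {i e : ℕ} {A : Word} (hA : Absorbs i e A) {B : Word}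
    (hB : B.count (i + 1) ≤ e) : Absorbs i (B.count i + e - B.count (i + 1)) (A ++ B) := by
  intro s p k hp
  rw [fscan_append, fscan_of_count_le i _ B _ (by omega), hA _ _ _ (by omega)]
  congr 1
  omega

theorem Absorbs.count_eq {i e : ℕ} {A : Word} (hA : Absorbs i e A) :
    A.count i = A.count (i + 1) + e := by
  have h := (fscan_of_count_le i 0 A none (Nat.le_add_right _ e)).symm.trans
    (hA 0 _ none (by omega))
  simp only [Prod.mk.injEq] at h
  omega

theorem fpos_absorbs {i e c d : ℕ} {A B : Word} (hA : Absorbs i e A) (hc : e ≤ c)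
    (hi : i ∉ B) (hi1 : i + 1 ∉ B) :
    fpos i (A ++ replicate c (i + 1) ++ replicate (d + 1) i ++ B) = some (A.length + c) := by
  rw [fpos_eq_fscan, fscan_append, fscan_of_count_le i _ B _ (by simp [count_eq_zero.2 hi]),
    count_eq_zero.2 hi, count_eq_zero.2 hi1, fscan_append, fscan_replicate_self, fscan_append,
    fscan_of_count_le i _ (replicate c (i + 1)) _ (by simp [count_replicate]),
    hA _ _ _ (by simpa [count_replicate] using hc)]
  simp

theorem kf_absorbs {i e c d : ℕ} {A B : Word} (hA : Absorbs i e A) (hc : e ≤ c)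
    (hi : i ∉ B) (hi1 : i + 1 ∉ B) :
    kf i (A ++ replicate c (i + 1) ++ replicate (d + 1) i ++ B)
      = some (A ++ replicate (c + 1) (i + 1) ++ replicate d i ++ B) := by
  rw [kf, fpos_absorbs hA hc hi hi1, Option.map_some, replicate_succ, replicate_succ']
  have hlen : A.length + c = (A ++ replicate c (i + 1)).length := by simp
  simp only [append_assoc, cons_append, nil_append]
  rw [← append_assoc, hlen, set_append, if_neg (lt_irrefl _), Nat.sub_self, set_cons_zero,
    append_assoc]

theorem iterOp_kf_absorbs {i e : ℕ} {A B : Word} (hA : Absorbs i e A) (hi : i ∉ B)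
    (hi1 : i + 1 ∉ B) (d : ℕ) {c : ℕ} (hc : e ≤ c) :
    iterOp (kf i) d (A ++ replicate c (i + 1) ++ replicate d i ++ B)
      = some (A ++ replicate (c + d) (i + 1) ++ B) := by
  induction d generalizing c with
  | zero => simp [iterOp]
  | succ d ih =>
    rw [iterOp, kf_absorbs hA hc hi hi1, Option.bind_some, ih (by omega), Nat.add_right_comm]
    rfl

theorem Si_absorbs {i e d : ℕ} {A B : Word} (hA : Absorbs i e A) (hi : i ∉ B)
    (hi1 : i + 1 ∉ B) :
    Si i (A ++ replicate e (i + 1) ++ replicate d i ++ B)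
      = some (A ++ replicate (e + d) (i + 1) ++ B) := by
  have hcount := hA.count_eq
  have hcount_i : (A ++ replicate e (i + 1) ++ replicate d i ++ B).count i = A.count i + d := by
    simp [count_replicate, count_eq_zero.2 hi]
  have hcount_i1 : (A ++ replicate e (i + 1) ++ replicate d i ++ B).count (i + 1)
      = A.count (i + 1) + e := by
    simp [count_replicate, count_eq_zero.2 hi1]
  rw [Si, hcount_i, hcount_i1, if_pos (by omega),
    show A.count i + d - (A.count (i + 1) + e) = d by omega]
  exact iterOp_kf_absorbs hA hi hi1 d le_rfl

/-- `decRuns m a k = (a+k-1)^{m (a+k-1)} ⋯ (a+1)^{m (a+1)} a^{m a}`. -/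
def decRuns (m : ℕ → ℕ) (a : ℕ) : ℕ → Word
  | 0 => []
  | k + 1 => decRuns m (a + 1) k ++ replicate (m a) a

theorem decRuns_eq_flatten (m : ℕ → ℕ) (k : ℕ) : ∀ a,
    decRuns m a k = ((range k).reverse.map fun c => replicate (m (a + c)) (a + c)).flatten := by
  induction k with
  | zero => intro a; rfl
  | succ k ih =>
    intro a
    rw [decRuns, ih, range_succ_eq_map, reverse_cons, map_append, flatten_append, ← map_reverse,
      map_map]
    simp [Function.comp_def, Nat.add_assoc, Nat.add_comm 1]

theorem count_decRuns (m : ℕ → ℕ) (k : ℕ) : ∀ a x,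
    (decRuns m a k).count x = if a ≤ x ∧ x < a + k then m x else 0 := by
  induction k with
  | zero => intro a x; simp [decRuns]
  | succ k ih =>
    intro a x
    rw [decRuns, count_append, ih, count_replicate]
    by_cases hx : x = a
    · subst hx
      simp
    · simp only [beq_iff_eq, Ne.symm hx, if_false, Nat.add_zero]
      split_ifs <;> first | rfl | omega

/-- The multiplicity of the letter `x` in row `t + 1` of `T^λ`. -/
def rowMult (lam : ℕ → ℕ) (t x : ℕ) : ℕ := lam (t + x) - lam (t + x + 1)

/-- Row `t + 1` of `T^λ` after `S_1, …, S_{j-1}`: its letters `≤ j` are merged into one run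
of `j`. -/
def rowPart (lam : ℕ → ℕ) (r t j : ℕ) : Word :=
  decRuns (rowMult lam t) (j + 1) (r - t - j) ++ replicate (lam (t + 1) - lam (t + j + 1)) j

theorem rowMult_succ (lam : ℕ → ℕ) (t x : ℕ) :
    rowMult lam (t + 1) x = rowMult lam t (x + 1) := by
  rw [rowMult, rowMult, Nat.add_right_comm t 1 x, Nat.add_assoc t x 1]

section Rows

variable {lam : ℕ → ℕ} {r : ℕ}

theorem rowMult_eq_zero (hzero : ∀ k, r < k → lam k = 0) {t x : ℕ} (h : r < t + x) :
    rowMult lam t x = 0 := by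
  rw [rowMult, hzero _ h, Nat.zero_sub]

theorem Trow_eq_rowPart_one {t : ℕ} (ht : t < r) : Trow lam r (t + 1) = rowPart lam r t 1 := by
  obtain ⟨k, hk⟩ : ∃ k, r - t = k + 1 := ⟨r - t - 1, by omega⟩
  have hrow : rowPart lam r t 1 = decRuns (rowMult lam t) 1 (k + 1) := by
    rw [rowPart, show r - t - 1 = k by omega]
    rfl
  rw [hrow, decRuns_eq_flatten, Trow, show r - (t + 1) + 1 = k + 1 by omega]
  congr 2
  funext c
  rw [rowMult, Nat.add_comm 1 c, Nat.add_right_comm t 1 c, Nat.add_assoc t c 1]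

theorem rowPart_split (hzero : ∀ k, r < k → lam k = 0) (t j : ℕ) :
    rowPart lam r t j = decRuns (rowMult lam t) (j + 2) (r - t - (j + 1))
      ++ replicate (rowMult lam t (j + 1)) (j + 1)
      ++ replicate (lam (t + 1) - lam (t + j + 1)) j := by
  rw [rowPart]
  rcases Nat.lt_or_ge (t + j) r with h | h
  · rw [show r - t - j = r - t - (j + 1) + 1 by omega, decRuns]
  · rw [rowMult_eq_zero hzero (by omega), show r - t - j = 0 by omega,
      show r - t - (j + 1) = 0 by omega]
    rfl

theorem rowPart_eq_replicate (hzero : ∀ k, r < k → lam k = 0) {t j : ℕ} (h : r ≤ t + j) :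
    rowPart lam r t j = replicate (lam (t + 1)) j := by
  rw [rowPart, show r - t - j = 0 by omega, hzero (t + j + 1) (by omega)]
  rfl

theorem count_rowPart_one (hzero : ∀ k, r < k → lam k = 0) (t : ℕ) {x : ℕ} (hx : 1 ≤ x) :
    (rowPart lam r t 1).count x = rowMult lam t x := by
  rw [rowPart, count_append, count_decRuns, count_replicate]
  rcases Nat.eq_or_lt_of_le hx with rfl | hx
  · simp [rowMult]
  · rw [show (1 == x) = false by simp; omega, if_neg Bool.false_ne_true, Nat.add_zero]
    split_ifs with h
    · rfl
    · exact (rowMult_eq_zero hzero (by omega)).symm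

theorem Si_rowPart (hmono : AntitoneOn lam (Set.Ici 1)) (hzero : ∀ k, r < k → lam k = 0)
    {t j : ℕ} {P S : Word} (hP : Absorbs j (rowMult lam t (j + 1)) P) (hj : j ∉ S)
    (hj1 : j + 1 ∉ S) :
    Si j (P ++ rowPart lam r t j ++ S) = some (P ++ rowPart lam r t (j + 1) ++ S) := by
  set D := decRuns (rowMult lam t) (j + 2) (r - t - (j + 1))
  have hD : Absorbs j (rowMult lam t (j + 1)) (P ++ D) := by
    simpa [D, count_decRuns] using hP.append (B := D) (by simp [D, count_decRuns])
  have hmerge : rowMult lam t (j + 1) + (lam (t + 1) - lam (t + j + 1))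
      = lam (t + 1) - lam (t + (j + 1) + 1) := by
    have h1 : lam (t + j + 1 + 1) ≤ lam (t + j + 1) :=
      hmono (Set.mem_Ici.2 (by omega)) (Set.mem_Ici.2 (by omega)) (by omega)
    have h2 : lam (t + j + 1) ≤ lam (t + 1) :=
      hmono (Set.mem_Ici.2 (by omega)) (Set.mem_Ici.2 (by omega)) (by omega)
    rw [rowMult, ← Nat.add_assoc]
    omega
  have h := Si_absorbs (d := lam (t + 1) - lam (t + j + 1)) hD hj hj1
  rw [hmerge] at h
  rw [rowPart_split hzero, rowPart]
  simpa only [append_assoc] using h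

end Rows

theorem applyS_append (l₁ l₂ : List ℕ) (o : Option Word) :
    applyS (l₁ ++ l₂) o = applyS l₂ (applyS l₁ o) :=
  foldl_append

theorem applyS_range_map_succ {w : ℕ → Word} {k : ℕ}
    (h : ∀ j < k, Si (j + 1) (w j) = some (w (j + 1))) :
    applyS ((range k).map (· + 1)) (some (w 0)) = some (w k) := by
  induction k with
  | zero => rfl
  | succ k ih =>
    rw [range_succ, map_append, applyS_append, ih fun j hj => h j (by omega)]
    exact h k k.lt_succ_self

theorem applyS_flatten_range {blocks : ℕ → List ℕ} {w : ℕ → Option Word} {k : ℕ}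
    (h : ∀ t < k, applyS (blocks t) (w t) = w (t + 1)) :
    applyS ((range k).map blocks).flatten (w 0) = w k := by
  induction k with
  | zero => rfl
  | succ k ih =>
    rw [range_succ, map_append, flatten_append, applyS_append, ih fun t ht => h t (by omega)]
    simpa using h k k.lt_succ_self

theorem applyS_rowPart {lam : ℕ → ℕ} {r : ℕ} (hmono : AntitoneOn lam (Set.Ici 1))
    (hzero : ∀ k, r < k → lam k = 0) {t k : ℕ} {P S : Word}
    (hP : ∀ j, 1 ≤ j → Absorbs j (rowMult lam t (j + 1)) P) (hS : ∀ x ∈ S, k + 1 < x) :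
    applyS ((range k).map (· + 1)) (some (P ++ rowPart lam r t 1 ++ S))
      = some (P ++ rowPart lam r t (k + 1) ++ S) :=
  applyS_range_map_succ (w := fun j => P ++ rowPart lam r t (j + 1) ++ S) fun j hj =>
    Si_rowPart hmono hzero (hP _ (by omega)) (fun h => by have := hS _ h; omega)
      (fun h => by have := hS _ h; omega)

theorem w0seq_eq (n : ℕ) :
    w0seq n = ((range n).map fun t => (range (n - 1 - t)).map (· + 1)).flatten := by
  rcases n with _ | n
  · rfl
  · rw [w0seq, Nat.add_sub_cancel, range_eq_range', reverse_range', map_map, range_succ,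
      map_append, flatten_append]
    simp only [Nat.sub_self, range_zero, map_nil, map_cons, flatten_cons, flatten_nil,
      append_nil]
    congr 1
    refine map_congr_left fun t ht => ?_
    rw [mem_range] at ht
    simp only [Function.comp_apply, Nat.zero_add]
    congr 2
    omega

theorem readT_cons (v : Word) (T : List Word) : readT (v :: T) = readT T ++ v := by
  simp [readT]

theorem readT_append (T T' : List Word) : readT (T ++ T') = readT T' ++ readT T := by
  simp [readT]

def mixedTab (n : ℕ) (lam : ℕ → ℕ) (t : ℕ) : List Word :=
  (Ltab n lam).take t ++ (Ttab n lam).drop t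

section Tableaux

variable {n : ℕ} {lam : ℕ → ℕ}

theorem length_Ttab : (Ttab n lam).length = ell n lam := by
  simp [Ttab]

theorem length_Ltab : (Ltab n lam).length = ell n lam := by
  simp [Ltab]

theorem readT_drop_Ttab (hzero : ∀ k, ell n lam < k → lam k = 0) (t : ℕ) :
    readT ((Ttab n lam).drop t)
      = readT ((Ttab n lam).drop (t + 1)) ++ rowPart lam (ell n lam) t 1 := by
  rcases Nat.lt_or_ge t (ell n lam) with ht | ht
  · rw [drop_eq_getElem_cons (by rwa [length_Ttab]), readT_cons]
    simp [Ttab, Trow_eq_rowPart_one ht]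
  · rw [drop_of_length_le (by rw [length_Ttab]; omega),
      drop_of_length_le (by rw [length_Ttab]; omega), rowPart_eq_replicate hzero (by omega),
      hzero _ (by omega)]
    rfl

theorem readT_take_succ_Ltab (hzero : ∀ k, ell n lam < k → lam k = 0) (t : ℕ) :
    readT ((Ltab n lam).take (t + 1))
      = replicate (lam (t + 1)) (n - t) ++ readT ((Ltab n lam).take t) := by
  rw [take_add_one, readT_append]
  rcases Nat.lt_or_ge t (ell n lam) with ht | ht
  · simp [Ltab, ht, readT]
  · simp [Ltab, hzero (t + 1) (by omega), readT, Nat.not_lt.2 ht]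

theorem lt_of_mem_readT_take_Ltab {t x : ℕ} (ht : t ≤ n)
    (hx : x ∈ readT ((Ltab n lam).take t)) : n - t < x := by
  simp only [readT, Ltab, ← map_take, take_range, mem_flatten, mem_reverse, mem_map,
    mem_range] at hx
  obtain ⟨_, ⟨i, hi, rfl⟩, hx⟩ := hx
  rw [eq_of_mem_replicate hx]
  omega

theorem absorbs_readT_drop_Ttab (hzero : ∀ k, ell n lam < k → lam k = 0) {i : ℕ} (hi : 1 ≤ i)
    (q : ℕ) : Absorbs i (rowMult lam q i) (readT ((Ttab n lam).drop q)) := by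
  obtain ⟨m, hm⟩ : ∃ m, ell n lam ≤ q + m := ⟨ell n lam, by omega⟩
  induction m generalizing q with
  | zero =>
    rw [drop_of_length_le (by rw [length_Ttab]; omega), rowMult_eq_zero hzero (by omega)]
    exact absorbs_nil i
  | succ m ih =>
    have hcount := count_rowPart_one hzero q (x := i + 1) (by omega)
    have h := (ih (q + 1) (by omega)).append (B := rowPart lam (ell n lam) q 1)
      (by rw [hcount, rowMult_succ])
    rw [readT_drop_Ttab hzero]
    convert h using 2
    rw [hcount, count_rowPart_one hzero q hi, rowMult_succ]
    omega

theorem applyS_block (hmono : AntitoneOn lam (Set.Ici 1))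
    (hzero : ∀ k, ell n lam < k → lam k = 0) (hrn : ell n lam ≤ n) {t : ℕ} (ht : t < n) :
    applyS ((range (n - 1 - t)).map (· + 1)) (some (readT (mixedTab n lam t)))
      = some (readT (mixedTab n lam (t + 1))) := by
  rw [mixedTab, mixedTab, readT_append, readT_append, readT_drop_Ttab hzero t,
    readT_take_succ_Ltab hzero t, ← append_assoc, show n - t = n - 1 - t + 1 by omega,
    ← rowPart_eq_replicate hzero (show ell n lam ≤ t + (n - 1 - t + 1) by omega)]
  refine applyS_rowPart hmono hzero (fun j hj => ?_) fun x hx => ?_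
  · rw [← rowMult_succ]
    exact absorbs_readT_drop_Ttab hzero hj (t + 1)
  · have := lt_of_mem_readT_take_Ltab ht.le hx
    omega

theorem applyS_w0seq (hmono : AntitoneOn lam (Set.Ici 1))
    (hzero : ∀ k, ell n lam < k → lam k = 0) (hrn : ell n lam ≤ n) :
    applyS (w0seq n) (some (readT (mixedTab n lam 0))) = some (readT (mixedTab n lam n)) := by
  rw [w0seq_eq]
  exact applyS_flatten_range (w := fun t => some (readT (mixedTab n lam t)))
    fun t ht => applyS_block hmono hzero hrn ht

theorem mixedTab_zero : mixedTab n lam 0 = Ttab n lam := by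
  simp [mixedTab]

theorem mixedTab_self (hrn : ell n lam ≤ n) : mixedTab n lam n = Ltab n lam := by
  rw [mixedTab, take_of_length_le (by rwa [length_Ltab]),
    drop_of_length_le (by rwa [length_Ttab]), append_nil]

end Tableaux

theorem ell_le (n : ℕ) (lam : ℕ → ℕ) : ell n lam ≤ n := by
  have h : ell n lam ≤ (Finset.Icc 1 n).card := Finset.card_filter_le _ _
  rwa [Nat.card_Icc, Nat.add_sub_cancel] at h

section Partition

variable {n : ℕ} {lam : ℕ → ℕ}

theorem IsStrictPartition.antitoneOn (h : IsStrictPartition n lam) :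
    AntitoneOn lam (Set.Ici 1) :=
  antitoneOn_nat_Ici_of_succ_le fun i hi => by
    rcases Nat.lt_or_ge i n with hin | hin
    · exact (h.2.2 i hi hin).1
    · rw [h.2.1 (i + 1) (by omega)]
      exact Nat.zero_le _

theorem IsStrictPartition.eq_zero_of_ell_lt (h : IsStrictPartition n lam) {j : ℕ}
    (hj : ell n lam < j) : lam j = 0 := by
  rcases Nat.lt_or_ge n j with hnj | hjn
  · exact h.2.1 j hnj
  by_contra hne
  have hsub : Finset.Icc 1 j ⊆ (Finset.Icc 1 n).filter (fun i => lam i ≠ 0) := by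
    intro x hx
    rw [Finset.mem_Icc] at hx
    have := h.antitoneOn (Set.mem_Ici.2 hx.1) (Set.mem_Ici.2 (by omega)) hx.2
    simp only [Finset.mem_filter, Finset.mem_Icc]
    omega
  have hcard := Finset.card_le_card hsub
  rw [Nat.card_Icc, Nat.add_sub_cancel] at hcard
  exact hj.not_ge hcard

end Partition

end QueerCrystal

theorem Sw0_Ttab_eq_Ltab_general (n : ℕ) (lam : ℕ → ℕ)
    (hlam : QueerCrystal.IsStrictPartition n lam) :
    QueerCrystal.applyS (QueerCrystal.w0seq n)
        (some (QueerCrystal.readT (QueerCrystal.Ttab n lam)))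
      = some (QueerCrystal.readT (QueerCrystal.Ltab n lam)) := by
  have hrn := QueerCrystal.ell_le n lam
  have h := QueerCrystal.applyS_w0seq hlam.antitoneOn (fun _ => hlam.eq_zero_of_ell_lt) hrn
  rwa [QueerCrystal.mixedTab_zero, QueerCrystal.mixedTab_self hrn] at h

/-- `S_{w₀}(read(T^λ)) = read(L^λ)`. -/
theorem Sw0_Ttab_eq_Ltab (n : ℕ) (hn : 2 ≤ n) (lam : ℕ → ℕ)
    (hlam : QueerCrystal.IsStrictPartition n lam) (hell : 1 ≤ QueerCrystal.ell n lam) :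
    QueerCrystal.applyS (QueerCrystal.w0seq n)
        (some (QueerCrystal.readT (QueerCrystal.Ttab n lam)))
      = some (QueerCrystal.readT (QueerCrystal.Ltab n lam)) :=
  Sw0_Ttab_eq_Ltab_general n lam hlam
end

section
/- Let ℂ(q) be the field of rational functions over ℂ in the variable q. For every integer m ≥ 2 there is no f ∈ ℂ(q) with f² = (q^{2m} − q^{−2m})/(q² − q^{−2}); that is, the q-integer (q^{2m} − q^{−2m})/(q² − q^{−2}) is not a square in ℂ(q). -/
/-!
Multiplying the `q`-integer by the square `q^{2m-2}` turns it into `(q^{4m} - 1)/(q^4 - 1)`.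
A primitive `4m`-th root of unity is a simple root of the numerator and, as `m ≥ 2`, not a root of
the denominator; but in a square of a rational function every point has even total multiplicity
in numerator and denominator.
-/

open Polynomial

namespace Polynomial

variable {R : Type*} [CommRing R] [IsDomain R]

theorem even_rootMultiplicity_add_of_sq_mul_eq_mul_sq {a b p q : R[X]}
    (h : a ^ 2 * q = p * b ^ 2) (hp : p ≠ 0) (hq : q ≠ 0) (hb : b ≠ 0) (x : R) :
    Even (rootMultiplicity x p + rootMultiplicity x q) := by
  have ha : a ≠ 0 := by
    rintro rfl
    simp_all
  have hmul := congrArg (rootMultiplicity x) h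
  rw [sq, sq, rootMultiplicity_mul (by positivity), rootMultiplicity_mul (by positivity),
    rootMultiplicity_mul (by positivity), rootMultiplicity_mul (by positivity)] at hmul
  exact ⟨rootMultiplicity x a + rootMultiplicity x q - rootMultiplicity x b, by omega⟩

variable {K : Type*} [Field K] [Algebra R[X] K] [IsFractionRing R[X] K]

theorem even_rootMultiplicity_add_of_sq_eq_div {f : K} {p q : R[X]}
    (h : f ^ 2 = algebraMap R[X] K p / algebraMap R[X] K q) (hp : p ≠ 0) (hq : q ≠ 0) (x : R) :
    Even (rootMultiplicity x p + rootMultiplicity x q) := by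
  obtain ⟨a, b, hb, rfl⟩ := IsFractionRing.div_surjective R[X] f
  have hb0 : b ≠ 0 := nonZeroDivisors.ne_zero hb
  refine even_rootMultiplicity_add_of_sq_mul_eq_mul_sq (a := a) ?_ hp hq hb0 x
  apply IsFractionRing.injective R[X] K
  have hbK : algebraMap R[X] K b ≠ 0 :=
    IsFractionRing.to_map_ne_zero_of_mem_nonZeroDivisors hb
  have hqK : algebraMap R[X] K q ≠ 0 := by simpa using hq
  rw [div_pow, div_eq_div_iff (pow_ne_zero 2 hbK) hqK] at h
  simpa [map_mul, map_pow] using h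

theorem rootMultiplicity_X_pow_sub_one_of_pow_eq_one {K : Type*} [Field K] {n : ℕ} (hn : (n : K) ≠ 0)
    {ζ : K} (hζ : ζ ^ n = 1) : rootMultiplicity ζ (X ^ n - 1 : K[X]) = 1 := by
  have hsep : (X ^ n - 1 : K[X]).Separable := X_pow_sub_one_separable_iff.2 hn
  refine le_antisymm (rootMultiplicity_le_one_of_separable hsep ζ) ?_
  exact (rootMultiplicity_pos hsep.ne_zero).2 (by simp [hζ])

end Polynomial

theorem qint_mul_zpow_sq_eq_div {F : Type*} [Field F] {x : F} (hx : x ≠ 0) (hx4 : x ^ 4 ≠ 1)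
    (m : ℕ) :
    (x ^ (2 * (m : ℤ)) - x ^ (-(2 * (m : ℤ)))) / (x ^ (2 : ℤ) - x ^ (-2 : ℤ)) *
      (x ^ ((m : ℤ) - 1)) ^ 2 = (x ^ (4 * m) - 1) / (x ^ 4 - 1) := by
  have h4 : x ^ 4 - 1 ≠ 0 := sub_ne_zero.2 hx4
  have h2 : x ^ 2 - (x ^ 2)⁻¹ ≠ 0 := by
    intro h
    apply h4
    field_simp at h
    linear_combination h
  rw [← zpow_natCast, ← zpow_mul, Nat.cast_ofNat, mul_comm _ (2 : ℤ), mul_sub_one,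
    zpow_sub₀ hx, zpow_neg, zpow_neg, zpow_mul, zpow_natCast]
  simp only [zpow_ofNat]
  field_simp
  ring

/-- In `ℂ(q)`, the field of rational functions, the quantum integer
`(q^{2m} − q^{−2m})/(q² − q^{−2})` is not a square for any integer `m ≥ 2`. -/
theorem qint_not_square_in_ratfunc (m : ℕ) (hm : 2 ≤ m) :
    ¬ ∃ f : RatFunc ℂ,
        f ^ 2 =
          ((RatFunc.X : RatFunc ℂ) ^ (2 * (m : ℤ)) -
              (RatFunc.X : RatFunc ℂ) ^ (-(2 * (m : ℤ)))) /
          ((RatFunc.X : RatFunc ℂ) ^ (2 : ℤ) - (RatFunc.X : RatFunc ℂ) ^ (-2 : ℤ)) := by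
  rintro ⟨f, hf⟩
  have hq : (X ^ 4 - 1 : ℂ[X]) ≠ 0 := X_pow_sub_C_ne_zero (by norm_num) 1
  have hX4 : (RatFunc.X : RatFunc ℂ) ^ 4 ≠ 1 := by
    simpa [sub_eq_zero, RatFunc.algebraMap_X] using
      (map_ne_zero_iff _ (IsFractionRing.injective ℂ[X] (RatFunc ℂ))).2 hq
  have hsq : (f * RatFunc.X ^ ((m : ℤ) - 1)) ^ 2 =
      algebraMap ℂ[X] (RatFunc ℂ) (X ^ (4 * m) - 1) /
        algebraMap ℂ[X] (RatFunc ℂ) (X ^ 4 - 1) := by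
    rw [mul_pow, hf, qint_mul_zpow_sq_eq_div RatFunc.X_ne_zero hX4]
    simp [RatFunc.algebraMap_X]
  obtain ⟨ζ, hζ⟩ : ∃ ζ : ℂ, IsPrimitiveRoot ζ (4 * m) :=
    ⟨_, Complex.isPrimitiveRoot_exp (4 * m) (by omega)⟩
  have hnum : rootMultiplicity ζ (X ^ (4 * m) - 1) = 1 :=
    rootMultiplicity_X_pow_sub_one_of_pow_eq_one (by norm_cast; omega) hζ.pow_eq_one
  have hden : rootMultiplicity ζ (X ^ 4 - 1) = 0 := by
    refine rootMultiplicity_eq_zero ?_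
    simpa [sub_eq_zero] using hζ.pow_ne_one_of_pos_of_lt (by norm_num) (by omega)
  have hparity := even_rootMultiplicity_add_of_sq_eq_div hsq
    (X_pow_sub_C_ne_zero (by omega) 1) hq ζ
  rw [hnum, hden] at hparity
  exact Nat.not_even_one hparity
end
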